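/- If two datasets are partitioned over the same finite set of clients into pairwise disjoint partitions, and for exactly one client c the partitions differ by exactly one element while for all other clients the partitions are equal, then the global datasets (the unions of the partitions) differ by exactly one element. -/
import Mathlib


def diffByOne {α : Type*} (A B : Set α) : Prop :=
  ∃ x, (A \ B) ∪ (B \ A) = {x}

/-- if partitions over the same clients are pairwise disjoint,
    differ by one element at exactly one client c and agree elsewhere,
    then the global unions differ by one element. -/
theorem global_diffByOne {α K : Type*} (s : Finset K) (P0 P1 : K → Set α)
    (hdisj0 : ∀ i ∈ s, ∀ j ∈ s, i ≠ j → P0 i ∩ P0 j = ∅)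
    (hdisj1 : ∀ i ∈ s, ∀ j ∈ s, i ≠ j → P1 i ∩ P1 j = ∅)
    (c : K) (hc : c ∈ s)
    (hdiff : diffByOne (P0 c) (P1 c))
    (heq : ∀ k ∈ s, k ≠ c → P0 k = P1 k) :
    diffByOne (⋃ k ∈ s, P0 k) (⋃ k ∈ s, P1 k) := by
  obtain ⟨x, hx⟩ := hdiff
  refine ⟨x, ?_⟩
  ext y
  simp only [Set.mem_union, Set.mem_diff, Set.mem_iUnion, Set.mem_singleton_iff,
    exists_prop]
  constructor
  · rintro (⟨⟨k, hk, hyk⟩, hnot⟩ | ⟨⟨k, hk, hyk⟩, hnot⟩)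
    · by_cases hkc : k = c
      · subst hkc
        have : y ∈ ({x} : Set α) := hx ▸ Or.inl ⟨hyk, fun h => hnot ⟨k, hk, h⟩⟩
        exact this
      · exact absurd ⟨k, hk, (heq k hk hkc) ▸ hyk⟩ hnot
    · by_cases hkc : k = c
      · subst hkc
        have : y ∈ ({x} : Set α) := hx ▸ Or.inr ⟨hyk, fun h => hnot ⟨k, hk, h⟩⟩
        exact this
      · exact absurd ⟨k, hk, (heq k hk hkc).symm ▸ hyk⟩ hnot
  · rintro rfl
    have hymem : y ∈ (P0 c \ P1 c) ∪ (P1 c \ P0 c) := hx ▸ rfl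
    rcases hymem with ⟨h0, h1⟩ | ⟨h1, h0⟩
    · refine Or.inl ⟨⟨c, hc, h0⟩, ?_⟩
      rintro ⟨j, hj, hyj⟩
      by_cases hjc : j = c
      · exact h1 (hjc ▸ hyj)
      · have := hdisj0 c hc j hj (Ne.symm hjc)
        exact absurd (Set.mem_inter h0 ((heq j hj hjc) ▸ hyj)) (this ▸ id)
    · refine Or.inr ⟨⟨c, hc, h1⟩, ?_⟩
      rintro ⟨j, hj, hyj⟩
      by_cases hjc : j = c
      · exact h0 (hjc ▸ hyj)
      · have := hdisj1 c hc j hj (Ne.symm hjc)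
        exact absurd (Set.mem_inter h1 ((heq j hj hjc).symm ▸ hyj)) (this ▸ id)
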